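/- (Rebalancing Criterion) Suppose asset j is dominant, assume the high-frequency maximality property g_n(K') ≤ g_1* for every n ≥ 1 and every K' ∈ 𝒦, and let K ∈ 𝒦 with K_j > 0. Then for every ε ∈ (0, log(1/K_j)), taking n* := ⌈(1/ε)·log(1/K_j)⌉ (an integer ≥ 1), one has for all n ≥ n*: 0 ≤ g_1* − g_n(K) ≤ ε, where g_1* = E[log(1 + X_j(0))]. -/

import Mathlib

open MeasureTheory ProbabilityTheory Filter Topology Finset Real

/-- Compound (total) return of asset `i` over the first `n` periods:
`R_{n,i}(ω) = ∏_{k=0}^{n-1} (1 + X_i(k)(ω))`. -/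
noncomputable def compoundReturn {Ω : Type*} {m : ℕ} (X : ℕ → Ω → Fin m → ℝ)
    (n : ℕ) (ω : Ω) (i : Fin m) : ℝ :=
  ∏ k ∈ Finset.range n, (1 + X k ω i)

/-- Expected logarithmic growth with rebalancing period `n`:
`g_n(K) = (1/n) E[log (Kᵀ R_n)]`. -/
noncomputable def elg {Ω : Type*} [MeasureSpace Ω] {m : ℕ} (X : ℕ → Ω → Fin m → ℝ)
    (n : ℕ) (K : Fin m → ℝ) : ℝ :=
  (n : ℝ)⁻¹ * ∫ ω, Real.log (∑ i, K i * compoundReturn X n ω i)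

/-- The admissible set: the unit simplex in `ℝ^m`. -/
def simplex (m : ℕ) : Set (Fin m → ℝ) := {K | (∀ i, 0 ≤ K i) ∧ ∑ i, K i = 1}

/-! The lower bound `0 ≤ g₁* - gₙ(K)` is the maximality hypothesis. For the upper bound, the
wealth `Kᵀ Rₙ` of the portfolio dominates the wealth `K_j R_{n,j}` held in asset `j`, whose
expected logarithm is `log K_j + n g₁*` because the periods are identically distributed. Hence
`g₁* - gₙ(K) ≤ log (1/K_j) / n`, which is at most `ε` once `n ≥ ⌈log (1/K_j) / ε⌉`. -/

lemma Real.abs_log_le_of_mem_Icc {a b x : ℝ} (ha : 0 < a) (hx : x ∈ Set.Icc a b) :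
    |Real.log x| ≤ max |Real.log a| |Real.log b| :=
  abs_le_max_abs_abs (Real.log_le_log ha hx.1) (Real.log_le_log (ha.trans_le hx.1) hx.2)

lemma MeasureTheory.Integrable.log_of_ae_mem_Icc {Ω : Type*} [MeasurableSpace Ω]
    {μ : Measure Ω} [IsFiniteMeasure μ] {f : Ω → ℝ} (hf : AEMeasurable f μ) {a b : ℝ}
    (ha : 0 < a) (hfab : ∀ᵐ ω ∂μ, f ω ∈ Set.Icc a b) :
    Integrable (fun ω => Real.log (f ω)) μ :=
  .of_bound (Real.measurable_log.comp_aemeasurable hf).aestronglyMeasurable _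
    (hfab.mono fun _ hω => Real.abs_log_le_of_mem_Icc ha hω)

lemma Real.log_mul_le_log_sum {ι : Type*} {s : Finset ι} {w r : ι → ℝ} {j : ι} (hj : j ∈ s)
    (hw : ∀ i ∈ s, 0 ≤ w i) (hr : ∀ i ∈ s, 0 ≤ r i) (hjpos : 0 < w j * r j) :
    Real.log (w j * r j) ≤ Real.log (∑ i ∈ s, w i * r i) :=
  Real.log_le_log hjpos <|
    Finset.single_le_sum (f := fun i => w i * r i) (fun i hi => mul_nonneg (hw i hi) (hr i hi)) hj

section Portfolio

variable {Ω : Type*} {m : ℕ} {X : ℕ → Ω → Fin m → ℝ} {Xmin Xmax : Fin m → ℝ}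

lemma compoundReturn_mem_Icc {ω : Ω} (hXmin : ∀ i, -1 < Xmin i)
    (hω : ∀ k i, Xmin i ≤ X k ω i ∧ X k ω i ≤ Xmax i) (n : ℕ) (i : Fin m) :
    compoundReturn X n ω i ∈ Set.Icc ((1 + Xmin i) ^ n) ((1 + Xmax i) ^ n) := by
  have hfac : ∀ k, 0 ≤ 1 + Xmin i ∧ 1 + Xmin i ≤ 1 + X k ω i ∧ 1 + X k ω i ≤ 1 + Xmax i :=
    fun k => ⟨by linarith [hXmin i], by linarith [(hω k i).1], by linarith [(hω k i).2]⟩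
  constructor
  · simpa [compoundReturn] using Finset.prod_le_prod (s := Finset.range n) (fun k _ => (hfac k).1)
      (fun k _ => (hfac k).2.1)
  · simpa [compoundReturn] using Finset.prod_le_prod (s := Finset.range n)
      (fun k _ => (hfac k).1.trans (hfac k).2.1) (fun k _ => (hfac k).2.2)

lemma log_compoundReturn {ω : Ω} {n : ℕ} {i : Fin m} (hpos : ∀ k, 0 < 1 + X k ω i) :
    Real.log (compoundReturn X n ω i) = ∑ k ∈ Finset.range n, Real.log (1 + X k ω i) :=
  Real.log_prod fun k _ => (hpos k).ne'

lemma portfolio_mem_Icc {ω : Ω} (hXmin : ∀ i, -1 < Xmin i)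
    (hω : ∀ k i, Xmin i ≤ X k ω i ∧ X k ω i ≤ Xmax i) {K : Fin m → ℝ} (hK : ∀ i, 0 ≤ K i)
    (j : Fin m) (n : ℕ) :
    ∑ i, K i * compoundReturn X n ω i ∈
      Set.Icc (K j * (1 + Xmin j) ^ n) (∑ i, K i * (1 + Xmax i) ^ n) := by
  have hR := compoundReturn_mem_Icc hXmin hω n
  have hR0 : ∀ i, 0 ≤ compoundReturn X n ω i :=
    fun i => (pow_nonneg (by linarith [hXmin i]) n).trans (hR i).1
  constructor
  · calc K j * (1 + Xmin j) ^ n ≤ K j * compoundReturn X n ω j :=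
          mul_le_mul_of_nonneg_left (hR j).1 (hK j)
      _ ≤ ∑ i, K i * compoundReturn X n ω i :=
          Finset.single_le_sum (f := fun i => K i * compoundReturn X n ω i)
            (fun i _ => mul_nonneg (hK i) (hR0 i)) (Finset.mem_univ j)
  · exact Finset.sum_le_sum fun i _ => mul_le_mul_of_nonneg_left (hR i).2 (hK i)

lemma log_add_sum_log_le_log_portfolio {ω : Ω} (hpos : ∀ k i, 0 < 1 + X k ω i)
    {K : Fin m → ℝ} (hK : ∀ i, 0 ≤ K i) {j : Fin m} (hKj : 0 < K j) (n : ℕ) :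
    Real.log (K j) + ∑ k ∈ Finset.range n, Real.log (1 + X k ω j) ≤
      Real.log (∑ i, K i * compoundReturn X n ω i) := by
  have hR : ∀ i, 0 < compoundReturn X n ω i :=
    fun i => Finset.prod_pos fun k _ => hpos k i
  rw [← log_compoundReturn (hpos · j), ← Real.log_mul hKj.ne' (hR j).ne']
  exact Real.log_mul_le_log_sum (Finset.mem_univ j) (fun i _ => hK i) (fun i _ => (hR i).le)
    (mul_pos hKj (hR j))

variable [MeasurableSpace Ω] {μ : Measure Ω}

lemma log_add_mul_integral_le_integral_log_portfolio [IsProbabilityMeasure μ]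
    (hident : ∀ k, IdentDistrib (X k) (X 0) μ μ) (hXmin : ∀ i, -1 < Xmin i)
    (hbdd : ∀ k, ∀ᵐ ω ∂μ, ∀ i, Xmin i ≤ X k ω i ∧ X k ω i ≤ Xmax i)
    {K : Fin m → ℝ} (hK : ∀ i, 0 ≤ K i) {j : Fin m} (hKj : 0 < K j) (n : ℕ) :
    Real.log (K j) + n * ∫ ω, Real.log (1 + X 0 ω j) ∂μ ≤
      ∫ ω, Real.log (∑ i, K i * compoundReturn X n ω i) ∂μ := by
  have hX : ∀ k, AEMeasurable (X k) μ := fun k => (hident k).aemeasurable_fst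
  have hbdd' : ∀ᵐ ω ∂μ, ∀ k i, Xmin i ≤ X k ω i ∧ X k ω i ≤ Xmax i := ae_all_iff.2 hbdd
  have hfac_int : ∀ k, Integrable (fun ω => Real.log (1 + X k ω j)) μ := fun k =>
    .log_of_ae_mem_Icc (a := 1 + Xmin j) (b := 1 + Xmax j) (by fun_prop)
      (by linarith [hXmin j]) <|
      (hbdd k).mono fun ω hω => ⟨by linarith [(hω j).1], by linarith [(hω j).2]⟩
  have hfac_eq : ∀ k, ∫ ω, Real.log (1 + X k ω j) ∂μ = ∫ ω, Real.log (1 + X 0 ω j) ∂μ :=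
    fun k => ((hident k).comp (by fun_prop : Measurable fun v : Fin m → ℝ =>
      Real.log (1 + v j))).integral_eq
  have hlower_int : Integrable
      (fun ω => Real.log (K j) + ∑ k ∈ Finset.range n, Real.log (1 + X k ω j)) μ :=
    (integrable_const _).add (integrable_finsetSum _ fun k _ => hfac_int k)
  have hportfolio_int : Integrable (fun ω => Real.log (∑ i, K i * compoundReturn X n ω i)) μ :=
    .log_of_ae_mem_Icc (by unfold compoundReturn; fun_prop)
      (mul_pos hKj (pow_pos (by linarith [hXmin j]) n))
      (hbdd'.mono fun ω hω => portfolio_mem_Icc hXmin hω hK j n)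
  calc Real.log (K j) + n * ∫ ω, Real.log (1 + X 0 ω j) ∂μ
      = ∫ ω, (Real.log (K j) + ∑ k ∈ Finset.range n, Real.log (1 + X k ω j)) ∂μ := by
        rw [integral_add (integrable_const _) (integrable_finsetSum _ fun k _ => hfac_int k),
          integral_finsetSum _ fun k _ => hfac_int k, Finset.sum_congr rfl fun k _ => hfac_eq k]
        simp
    _ ≤ ∫ ω, Real.log (∑ i, K i * compoundReturn X n ω i) ∂μ :=
        integral_mono_ae hlower_int hportfolio_int <| hbdd'.mono fun ω hω =>
          log_add_sum_log_le_log_portfolio (fun k i => by linarith [hXmin i, (hω k i).1]) hK hKj n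

end Portfolio

lemma sub_elg_le_log_div {Ω : Type*} [MeasureSpace Ω] [IsProbabilityMeasure (ℙ : Measure Ω)]
    {m : ℕ} {X : ℕ → Ω → Fin m → ℝ} (hident : ∀ k, IdentDistrib (X k) (X 0) ℙ ℙ)
    {Xmin Xmax : Fin m → ℝ} (hXmin : ∀ i, -1 < Xmin i)
    (hbdd : ∀ k, ∀ᵐ ω ∂(ℙ : Measure Ω), ∀ i, Xmin i ≤ X k ω i ∧ X k ω i ≤ Xmax i)
    {K : Fin m → ℝ} (hK : ∀ i, 0 ≤ K i) {j : Fin m} (hKj : 0 < K j) {n : ℕ} (hn : 0 < n) :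
    (∫ ω, Real.log (1 + X 0 ω j)) - elg X n K ≤ Real.log (1 / K j) / n := by
  have hn' : (0 : ℝ) < n := Nat.cast_pos.2 hn
  have h := log_add_mul_integral_le_integral_log_portfolio hident hXmin hbdd hK hKj n
  rw [elg, one_div, Real.log_inv]
  field_simp
  linarith

theorem rebalancing_criterion_general
    {Ω : Type*} [MeasureSpace Ω] [IsProbabilityMeasure (ℙ : Measure Ω)]
    {m : ℕ}
    (X : ℕ → Ω → Fin m → ℝ)
    (hident : ∀ k, IdentDistrib (X k) (X 0) ℙ ℙ)
    (Xmin Xmax : Fin m → ℝ)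
    (hXmin : ∀ i, -1 < Xmin i)
    (hbdd : ∀ k, ∀ᵐ ω ∂(ℙ : Measure Ω), ∀ i, Xmin i ≤ X k ω i ∧ X k ω i ≤ Xmax i)
    (j : Fin m)
    (hmax : ∀ n : ℕ, 1 ≤ n → ∀ K' ∈ simplex m,
      elg X n K' ≤ ∫ ω, Real.log (1 + X 0 ω j))
    (K : Fin m → ℝ) (hK : K ∈ simplex m) (hKj : 0 < K j)
    (ε : ℝ) (hε : ε ∈ Set.Ioo 0 (Real.log (1 / K j))) :
    1 ≤ ⌈(1 / ε) * Real.log (1 / K j)⌉₊ ∧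
    ∀ n : ℕ, ⌈(1 / ε) * Real.log (1 / K j)⌉₊ ≤ n →
      0 ≤ (∫ ω, Real.log (1 + X 0 ω j)) - elg X n K ∧
      (∫ ω, Real.log (1 + X 0 ω j)) - elg X n K ≤ ε := by
  obtain ⟨hε0, hεL⟩ := hε
  have hceil : 1 ≤ ⌈(1 / ε) * Real.log (1 / K j)⌉₊ :=
    Nat.one_le_ceil_iff.2 (mul_pos (one_div_pos.2 hε0) (hε0.trans hεL))
  refine ⟨hceil, fun n hn => ⟨sub_nonneg.2 (hmax n (hceil.trans hn) K hK), ?_⟩⟩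
  have hn0 : (0 : ℝ) < n := Nat.cast_pos.2 (hceil.trans hn)
  calc (∫ ω, Real.log (1 + X 0 ω j)) - elg X n K ≤ Real.log (1 / K j) / n :=
        sub_elg_le_log_div hident hXmin hbdd hK.1 hKj (hceil.trans hn)
    _ ≤ ε := by
        rw [div_le_iff₀ hn0]
        rw [Nat.ceil_le, one_div_mul_eq_div, div_le_iff₀ hε0] at hn
        linarith

/-- **Rebalancing criterion.** Suppose asset `j` is dominant, high-frequency maximality holds,
`K ∈ 𝒦` with `K_j > 0`, and `ε ∈ (0, log(1/K_j))`. Then with `n* = ⌈(1/ε)·log(1/K_j)⌉` (an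
integer `≥ 1`), for all `n ≥ n*` one has `0 ≤ g_1^* - g_n(K) ≤ ε`. -/
theorem rebalancing_criterion
    {Ω : Type*} [MeasureSpace Ω] [IsProbabilityMeasure (ℙ : Measure Ω)]
    {m : ℕ} (hm : 2 ≤ m)
    (X : ℕ → Ω → Fin m → ℝ)
    (hmeas : ∀ k, Measurable (X k))
    (hiid : iIndepFun X ℙ)
    (hident : ∀ k, IdentDistrib (X k) (X 0) ℙ ℙ)
    (Xmin Xmax : Fin m → ℝ)
    (hXmin : ∀ i, -1 < Xmin i)
    (hbdd : ∀ k, ∀ᵐ ω ∂(ℙ : Measure Ω), ∀ i, Xmin i ≤ X k ω i ∧ X k ω i ≤ Xmax i)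
    (j : Fin m)
    (hdom : ∀ i, i ≠ j → ∫ ω, (1 + X 0 ω i) / (1 + X 0 ω j) ≤ 1)
    (hmax : ∀ n : ℕ, 1 ≤ n → ∀ K' ∈ simplex m,
      elg X n K' ≤ ∫ ω, Real.log (1 + X 0 ω j))
    (K : Fin m → ℝ) (hK : K ∈ simplex m) (hKj : 0 < K j)
    (ε : ℝ) (hε : ε ∈ Set.Ioo 0 (Real.log (1 / K j))) :
    1 ≤ ⌈(1 / ε) * Real.log (1 / K j)⌉₊ ∧
    ∀ n : ℕ, ⌈(1 / ε) * Real.log (1 / K j)⌉₊ ≤ n →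
      0 ≤ (∫ ω, Real.log (1 + X 0 ω j)) - elg X n K ∧
      (∫ ω, Real.log (1 + X 0 ω j)) - elg X n K ≤ ε :=
  rebalancing_criterion_general X hident Xmin Xmax hXmin hbdd j hmax K hK hKj ε hε
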